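/- Fix m ∈ ℝ and σ > 0. The function p ↦ R(m, σ, p) on the open interval (0,1) has a unique stationary point, located at p* = 1/(1 + exp(A − B)) where A = (m²+σ²)/(2τ1²) + log(τ1/π) and B = (m²+σ²)/(2τ0²) + log(τ0/(1−π)); moreover p* is the global minimizer of p ↦ R(m, σ, p) on (0,1). -/

import Mathlib

/-- The penalty `R(m, σ, p)`. -/
noncomputable def Rpen (τ0 τ1 pr m σ p : ℝ) : ℝ :=
  p * ((m ^ 2 + σ ^ 2) / (2 * τ1 ^ 2) + Real.log (τ1 * p / (σ * pr))) +
    (1 - p) * ((m ^ 2 + σ ^ 2) / (2 * τ0 ^ 2) + Real.log (τ0 * (1 - p) / (σ * (1 - pr))))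

/-- `A = (m²+σ²)/(2τ1²) + log(τ1/π)`. -/
noncomputable def Aq (τ1 pr m σ : ℝ) : ℝ :=
  (m ^ 2 + σ ^ 2) / (2 * τ1 ^ 2) + Real.log (τ1 / pr)

/-- `B = (m²+σ²)/(2τ0²) + log(τ0/(1-π))`. -/
noncomputable def Bq (τ0 pr m σ : ℝ) : ℝ :=
  (m ^ 2 + σ ^ 2) / (2 * τ0 ^ 2) + Real.log (τ0 / (1 - pr))

/-- `p* = 1/(1 + exp(A - B))`. -/
noncomputable def pstar (τ0 τ1 pr m σ : ℝ) : ℝ :=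
  1 / (1 + Real.exp (Aq τ1 pr m σ - Bq τ0 pr m σ))

/-!
On `(0,1)` the penalty is `p ↦ (A - B) p - H(p) + const`, where `H` is the binary entropy.
Since `H` is strictly concave, the penalty is convex, and its derivative `A - B + logit p` vanishes
exactly where `logit p = B - A`, i.e. at `p = sigmoid (B - A) = p*`; a stationary point of a
convex function is a global minimum.
-/

open Real Set

noncomputable def logit (p : ℝ) : ℝ := log p - log (1 - p)

lemma logit_sigmoid (x : ℝ) : logit (sigmoid x) = x := by
  have h : 1 - sigmoid x = sigmoid x * exp (-x) := by rw [sigmoid_mul_rexp_neg, sigmoid_neg]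
  rw [logit, h, log_mul (sigmoid_pos x).ne' (exp_pos _).ne', log_exp]
  ring

lemma sigmoid_logit {p : ℝ} (hp : p ∈ Ioo (0 : ℝ) 1) : sigmoid (logit p) = p := by
  obtain ⟨hp0, hp1⟩ := hp
  have h1p : 0 < 1 - p := sub_pos.mpr hp1
  rw [sigmoid_def, logit, neg_sub, exp_sub, exp_log hp0, exp_log h1p]
  field_simp
  ring

lemma hasDerivAt_mul_sub_binEntropy (c : ℝ) {p : ℝ} (hp0 : p ≠ 0) (hp1 : p ≠ 1) :
    HasDerivAt (fun q => c * q - binEntropy q) (c + logit p) p :=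
  (((hasDerivAt_id p).const_mul c).sub (hasDerivAt_binEntropy hp0 hp1)).congr_deriv
    (by rw [logit]; ring)

lemma convexOn_mul_sub_binEntropy (c : ℝ) :
    ConvexOn ℝ (Icc 0 1) (fun q => c * q - binEntropy q) :=
  ((LinearMap.mul ℝ ℝ c).convexOn (convex_Icc 0 1)).sub strictConcave_binEntropy.concaveOn

lemma ConvexOn.isMinOn_of_hasDerivAt_eq_zero {S : Set ℝ} {f : ℝ → ℝ} {x : ℝ}
    (hf : ConvexOn ℝ S f) (hx : x ∈ interior S) (hfx : HasDerivAt f 0 x) : IsMinOn f S x :=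
  hf.isMinOn_of_rightDeriv_eq_zero hx (hfx.hasDerivWithinAt.derivWithin (uniqueDiffWithinAt_Ioi x))

lemma pstar_eq_sigmoid (τ0 τ1 pr m σ : ℝ) :
    pstar τ0 τ1 pr m σ = sigmoid (-(Aq τ1 pr m σ - Bq τ0 pr m σ)) := by
  rw [pstar, sigmoid_def, neg_neg, one_div]

lemma Rpen_eq_mul_sub_binEntropy {τ0 τ1 pr σ p : ℝ} (m : ℝ) (hτ0 : τ0 ≠ 0) (hτ1 : τ1 ≠ 0)
    (hpr0 : pr ≠ 0) (hpr1 : pr ≠ 1) (hσ : σ ≠ 0) (hp0 : p ≠ 0) (hp1 : p ≠ 1) :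
    Rpen τ0 τ1 pr m σ p =
      (Aq τ1 pr m σ - Bq τ0 pr m σ) * p - binEntropy p + (Bq τ0 pr m σ - log σ) := by
  have h1p : 1 - p ≠ 0 := sub_ne_zero.mpr hp1.symm
  have h1pr : 1 - pr ≠ 0 := sub_ne_zero.mpr hpr1.symm
  have hlog1 : log (τ1 * p / (σ * pr)) = log (τ1 / pr) + log p - log σ := by
    rw [log_div (by positivity) (by positivity), log_mul hτ1 hp0, log_mul hσ hpr0,
      log_div hτ1 hpr0]
    ring
  have hlog0 :
      log (τ0 * (1 - p) / (σ * (1 - pr))) = log (τ0 / (1 - pr)) + log (1 - p) - log σ := by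
    rw [log_div (by positivity) (by positivity), log_mul hτ0 h1p, log_mul hσ h1pr,
      log_div hτ0 h1pr]
    ring
  rw [Rpen, Aq, Bq, binEntropy, hlog1, hlog0, log_inv, log_inv]
  ring

/-- `p ↦ R(m,σ,p)` on `(0,1)` has a unique stationary point, located at
`p* = 1/(1 + exp(A - B))`, and `p*` is the global minimizer on `(0,1)`. -/
theorem pstar_unique_stationary_global_min
    (τ0 τ1 pr : ℝ) (hτ0 : 0 < τ0) (hτ01 : τ0 < τ1) (hpr : pr ∈ Set.Ioo (0 : ℝ) 1)
    (m σ : ℝ) (hσ : 0 < σ) :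
    pstar τ0 τ1 pr m σ ∈ Set.Ioo (0 : ℝ) 1 ∧
    deriv (fun p => Rpen τ0 τ1 pr m σ p) (pstar τ0 τ1 pr m σ) = 0 ∧
    (∀ p ∈ Set.Ioo (0 : ℝ) 1,
      deriv (fun p => Rpen τ0 τ1 pr m σ p) p = 0 → p = pstar τ0 τ1 pr m σ) ∧
    (∀ p ∈ Set.Ioo (0 : ℝ) 1,
      Rpen τ0 τ1 pr m σ (pstar τ0 τ1 pr m σ) ≤ Rpen τ0 τ1 pr m σ p) := by
  set c := Aq τ1 pr m σ - Bq τ0 pr m σ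
  have hR : EqOn (Rpen τ0 τ1 pr m σ)
      (fun p => c * p - binEntropy p + (Bq τ0 pr m σ - log σ)) (Ioo 0 1) := fun p hp =>
    Rpen_eq_mul_sub_binEntropy m hτ0.ne' (hτ0.trans hτ01).ne' hpr.1.ne' hpr.2.ne hσ.ne'
      hp.1.ne' hp.2.ne
  have hderiv : ∀ p ∈ Ioo (0 : ℝ) 1, HasDerivAt (Rpen τ0 τ1 pr m σ) (c + logit p) p :=
    fun p hp => ((hasDerivAt_mul_sub_binEntropy c hp.1.ne' hp.2.ne).add_const
      _).congr_of_eventuallyEq (hR.eventuallyEq_of_mem (isOpen_Ioo.mem_nhds hp))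
  have hconvex : ConvexOn ℝ (Ioo 0 1) (Rpen τ0 τ1 pr m σ) :=
    (((convexOn_mul_sub_binEntropy c).subset Ioo_subset_Icc_self (convex_Ioo 0 1)).add_const
      _).congr hR.symm
  have hmem : pstar τ0 τ1 pr m σ ∈ Ioo (0 : ℝ) 1 := by
    rw [pstar_eq_sigmoid]
    exact ⟨sigmoid_pos _, sigmoid_lt_one _⟩
  have hstat : HasDerivAt (Rpen τ0 τ1 pr m σ) 0 (pstar τ0 τ1 pr m σ) := by
    convert hderiv _ hmem using 1
    rw [pstar_eq_sigmoid, logit_sigmoid, add_neg_cancel]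
  refine ⟨hmem, hstat.deriv, fun p hp hp' => ?_, fun p hp => ?_⟩
  · rw [(hderiv p hp).deriv, add_eq_zero_iff_eq_neg'] at hp'
    rw [pstar_eq_sigmoid, ← hp', sigmoid_logit hp]
  · exact hconvex.isMinOn_of_hasDerivAt_eq_zero (by rwa [isOpen_Ioo.interior_eq]) hstat hp
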